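/- Let (f_0, f, ..., f) be an (n+1)-ary derivation of A_{n+1} where both f_0 and f are diagonal in the standard basis: f_0(e_i) = f_0^i e_i and f(e_i) = f_i e_i. Then for each i, f_i = (1/n) Σ_{j=1}^{n+1} f_0^j − f_0^i; in particular f is uniquely determined by f_0. Conversely, for any choice of scalars f_0^1,...,f_0^{n+1}, defining f by this formula yields an (n+1)-ary derivation (f_0, f, ..., f). -/

import Mathlib

/-- The diagonal linear map on `Fin N → k` with diagonal entries `c`. -/
def diagMap {k : Type*} [Field k] {N : ℕ} (c : Fin N → k) :
    (Fin N → k) →ₗ[k] (Fin N → k) :=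
  LinearMap.pi fun i => c i • LinearMap.proj i

section AnpAux
variable {k : Type*} [Field k] {N n : ℕ}

lemma diagMap_apply' (c : Fin N → k) (v : Fin N → k) (j : Fin N) :
    diagMap c v j = c j * v j := rfl

lemma diagMap_single' (c : Fin N → k) (i : Fin N) :
    diagMap c (Pi.single i (1 : k)) = c i • (Pi.single i (1 : k) : Fin N → k) := by
  funext j
  rcases eq_or_ne j i with h | h
  · subst h; simp [diagMap_apply']
  · simp [diagMap_apply', Pi.single_apply, h]

lemma rhs_sum' (m : MultilinearMap k (fun _ : Fin n => (Fin N → k)) (Fin N → k))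
    (c : Fin N → k) (g : Fin n → Fin N) :
    ∑ j, m (Function.update (fun j' => Pi.single (g j') (1 : k)) j
        (diagMap c (Pi.single (g j) (1 : k)))) =
      (∑ j, c (g j)) • m (fun j' => Pi.single (g j') (1 : k)) := by
  rw [Finset.sum_smul]
  refine Finset.sum_congr rfl fun j _ => ?_
  rw [diagMap_single', m.map_update_smul]
  congr 1
  rw [Function.update_eq_self]

lemma exists_scalar'
    (m : MultilinearMap k (fun _ : Fin n => (Fin (n+1) → k)) (Fin (n+1) → k))
    (halt : ∀ (x : Fin n → (Fin (n + 1) → k)) (p q : Fin n), p ≠ q → x p = x q → m x = 0)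
    (g : Fin n → Fin (n+1)) (hg : Function.Injective g) (i : Fin (n+1))
    (hi : Set.range g = ({i}ᶜ : Set (Fin (n+1)))) :
    ∃ t : k, m (fun j => Pi.single (g j) (1 : k)) =
      t • m (fun j => Pi.single (i.succAbove j) (1 : k)) := by
  have hrange : Set.range g = Set.range i.succAbove := by
    rw [hi, Fin.range_succAbove]
  let A : AlternatingMap k (Fin (n+1) → k) (Fin (n+1) → k) (Fin n) :=
    { m with map_eq_zero_of_eq' := fun v p q hpq hne => halt v p q hne hpq }
  let σ : Equiv.Perm (Fin n) :=
    (Equiv.ofInjective g hg).trans ((Equiv.setCongr hrange).trans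
      (Equiv.ofInjective _ (Fin.succAbove_right_injective (p := i))).symm)
  have hσ : ∀ j, i.succAbove (σ j) = g j := by
    intro j
    exact Equiv.apply_ofInjective_symm (f := i.succAbove)
      (Fin.succAbove_right_injective (p := i))
      ((Equiv.setCongr hrange) (Equiv.ofInjective g hg j))
  have hx : (fun j => Pi.single (g j) (1 : k)) =
      (fun j => (Pi.single (i.succAbove j) (1 : k) : Fin (n+1) → k)) ∘ σ := by
    funext j
    simp [Function.comp, hσ j]
  refine ⟨((Equiv.Perm.sign σ : ℤ) : k), ?_⟩
  have := A.map_perm (fun j => (Pi.single (i.succAbove j) (1 : k) : Fin (n+1) → k)) σ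
  rw [hx]
  show A _ = _
  rw [this, Units.smul_def, ← Int.cast_smul_eq_zsmul k]
  rfl

end AnpAux

/-- For diagonal maps `f₀(eᵢ) = f₀ⁱ eᵢ`, `f(eᵢ) = fᵢ eᵢ` on `A_{n+1}`:
`(f₀, f, …, f)` is an `(n+1)`-ary derivation iff `fᵢ = (1/n) Σⱼ f₀ʲ − f₀ⁱ` for all `i`;
in particular `f` is determined by `f₀`, and any choice of diagonal `f₀` gives rise to a
derivation via this formula. -/
theorem Anp1_diagonal_derivation_formula
    {k : Type*} [Field k] [CharZero k] {n : ℕ} (hn : 2 ≤ n)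
    (m : MultilinearMap k (fun _ : Fin n => (Fin (n + 1) → k)) (Fin (n + 1) → k))
    (halt : ∀ (x : Fin n → (Fin (n + 1) → k)) (p q : Fin n), p ≠ q → x p = x q → m x = 0)
    (hbasis : ∀ i : Fin (n + 1),
      m (fun j => Pi.single (i.succAbove j) (1 : k)) =
        ((-1 : k) ^ (n + (i : ℕ))) • (Pi.single i (1 : k) : Fin (n + 1) → k))
    (c0 c : Fin (n + 1) → k) :
    ((∀ x : Fin n → (Fin (n + 1) → k),
        diagMap c0 (m x) = ∑ i, m (Function.update x i (diagMap c (x i)))) →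
      ∀ i, c i = (1 / (n : k)) * (∑ j, c0 j) - c0 i) ∧
    ((∀ i, c i = (1 / (n : k)) * (∑ j, c0 j) - c0 i) →
      ∀ x : Fin n → (Fin (n + 1) → k),
        diagMap c0 (m x) = ∑ i, m (Function.update x i (diagMap c (x i)))) := by
  have hn0 : (n : k) ≠ 0 := Nat.cast_ne_zero.mpr (by omega)
  constructor
  · -- forward direction
    intro h
    have hkey : ∀ i : Fin (n+1), c0 i = ∑ j, c (i.succAbove j) := by
      intro i
      have hx := h (fun j => Pi.single (i.succAbove j) (1 : k))
      rw [rhs_sum' m c (i.succAbove), hbasis i] at hx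
      have hε : ((-1 : k) ^ (n + (i : ℕ))) ≠ 0 :=
        pow_ne_zero _ (neg_ne_zero.mpr one_ne_zero)
      have hx' := congrFun hx i
      simp only [diagMap_apply', Pi.smul_apply, Pi.single_eq_same, smul_eq_mul,
        mul_one] at hx'
      exact mul_right_cancel₀ hε hx'
    have hkey' : ∀ i, c0 i = (∑ j, c j) - c i := by
      intro i
      rw [hkey i, Fin.sum_univ_succAbove c i]
      ring
    have hT : ∑ j, c0 j = (n : k) * ∑ j, c j := by
      calc ∑ j, c0 j = ∑ i : Fin (n+1), ((∑ j, c j) - c i) :=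
            Finset.sum_congr rfl fun i _ => hkey' i
        _ = (n : k) * ∑ j, c j := by
            rw [Finset.sum_sub_distrib, Finset.sum_const, Finset.card_univ,
              Fintype.card_fin, nsmul_eq_mul]
            push_cast
            ring
    intro i
    have := hkey' i
    have hS : ∑ j, c j = (1 / (n : k)) * ∑ j, c0 j := by
      rw [hT]; field_simp
    rw [hS] at this
    linear_combination this
  · -- converse direction
    intro hc x
    have hS : ∑ j, c j = (1 / (n : k)) * ∑ j, c0 j := by
      calc ∑ j, c j = ∑ i : Fin (n+1), ((1 / (n : k)) * (∑ j, c0 j) - c0 i) :=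
            Finset.sum_congr rfl fun i _ => hc i
        _ = (1 / (n : k)) * ∑ j, c0 j := by
            rw [Finset.sum_sub_distrib, Finset.sum_const, Finset.card_univ,
              Fintype.card_fin, nsmul_eq_mul]
            push_cast
            field_simp
            ring
    have hc0 : ∀ i, c0 i = (∑ j, c j) - c i := by
      intro i
      rw [hS, hc i]; ring
    -- reduce to basis tuples via multilinearity
    have hmap : (diagMap c0).compMultilinearMap m =
        ∑ i : Fin n, m.compLinearMap
          (Function.update (fun _ : Fin n =>
            (LinearMap.id : (Fin (n+1) → k) →ₗ[k] (Fin (n+1) → k))) i (diagMap c)) := by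
      apply Module.Basis.ext_multilinear (fun _ => Pi.basisFun k (Fin (n+1)))
      intro g
      have hb : (fun j => (Pi.basisFun k (Fin (n+1))) (g j)) =
          fun j => (Pi.single (g j) (1 : k) : Fin (n+1) → k) := by
        funext j; simp [Pi.basisFun_apply]
      rw [hb]
      have hupd : ∀ i : Fin n,
          (m.compLinearMap (Function.update (fun _ : Fin n =>
            (LinearMap.id : (Fin (n+1) → k) →ₗ[k] (Fin (n+1) → k))) i (diagMap c)))
            (fun j => (Pi.single (g j) (1 : k) : Fin (n+1) → k)) =
          m (Function.update (fun j => (Pi.single (g j) (1 : k) : Fin (n+1) → k)) i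
            (diagMap c (Pi.single (g i) (1 : k)))) := by
        intro i
        rw [MultilinearMap.compLinearMap_apply]
        congr 1
        funext j
        rcases eq_or_ne j i with h | h
        · subst h; simp
        · simp [Function.update_of_ne h]
      rw [MultilinearMap.sum_apply, LinearMap.compMultilinearMap_apply,
        Finset.sum_congr rfl fun i _ => hupd i, rhs_sum' m c g]
      by_cases hg : Function.Injective g
      · -- injective case: find missing index
        have hcard : (Finset.image g Finset.univ).card = n := by
          rw [Finset.card_image_of_injective _ hg, Finset.card_univ, Fintype.card_fin]
        have hne : (Finset.image g Finset.univ)ᶜ.Nonempty := by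
          rw [← Finset.card_pos, Finset.card_compl, hcard, Fintype.card_fin]
          omega
        obtain ⟨i, hi⟩ := hne
        rw [Finset.mem_compl] at hi
        have himg : Finset.image g Finset.univ = ({i}ᶜ : Finset (Fin (n+1))) := by
          apply Finset.eq_of_subset_of_card_le
          · intro a ha
            rw [Finset.mem_compl, Finset.mem_singleton]
            rintro rfl
            exact hi ha
          · rw [hcard, Finset.card_compl, Finset.card_singleton, Fintype.card_fin]
            omega
        have hrange : Set.range g = ({i}ᶜ : Set (Fin (n+1))) := by
          have := congrArg (fun s : Finset (Fin (n+1)) => (s : Set (Fin (n+1)))) himg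
          simpa [Finset.coe_image, Set.image_univ] using this
        have hsum : ∑ j, c (g j) = c0 i := by
          rw [hc0 i]
          rw [show (∑ j, c (g j)) = ∑ a ∈ Finset.image g Finset.univ, c a from
            (Finset.sum_image (fun x _ y _ h => hg h)).symm, himg]
          have h2 := Finset.sum_compl_add_sum ({i} : Finset (Fin (n+1))) c
          rw [Finset.sum_singleton] at h2
          linear_combination h2
        obtain ⟨t, ht⟩ := exists_scalar' m halt g hg i hrange
        rw [hsum, ht, hbasis i]
        rw [map_smul, map_smul, diagMap_single', smul_smul, smul_smul, smul_smul,
          smul_smul]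
        congr 1
        ring
      · -- non-injective case
        rw [Function.not_injective_iff] at hg
        obtain ⟨p, q, hpq, hne⟩ := hg
        have hz : m (fun j => (Pi.single (g j) (1 : k) : Fin (n+1) → k)) = 0 :=
          halt _ p q hne (by rw [hpq])
        rw [hz, map_zero, smul_zero]
    have hx := DFunLike.congr_fun hmap x
    simp only [LinearMap.compMultilinearMap_apply, MultilinearMap.sum_apply] at hx
    rw [hx]
    refine Finset.sum_congr rfl fun i _ => ?_
    rw [MultilinearMap.compLinearMap_apply]
    congr 1
    funext j
    rcases eq_or_ne j i with h | h
    · subst h; simp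
    · simp [Function.update_of_ne h]
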